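/- Let G = K_{n_1,…,n_r} be a complete r-partite graph with r ≥ 2 and n_1 ≤ ⋯ ≤ n_r, and set n' = n_1 + ⋯ + n_{r−1}. If n_r > n', then G contains a path on 2n' + 1 vertices (a path of length 2n'), which equals 2n − max{n+1, 2·n_r}, the height of the binomial edge ideal J_G. -/

import Mathlib

/-!
Write `s = n'`: the vertices `0, …, s - 1` lie in the first `r - 1` parts and the vertices
`s, …, n - 1` in the last one, so every vertex below `s` is adjacent to every vertex from `s` on.
As `n_r ≥ s + 1`, the zigzag `s, 0, s + 1, 1, …, 2s - 1, s - 1, 2s` alternates between these two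
blocks and is a path with `2s + 1` vertices. The identity for the height is arithmetic in
`n = s + n_r` and `s < n_r`.
-/

/-- The first vertex (as a natural number) of the `k`-th part, i.e. `Σ_{i<k} ν i`. -/
def partStart {r : ℕ} (ν : Fin r → ℕ) (k : Fin r) : ℕ := ∑ i ∈ Finset.Iio k, ν i

/-- The natural number `j` is a vertex lying in the `k`-th part `V_k`. -/
def inPart {r : ℕ} (ν : Fin r → ℕ) (k : Fin r) (j : ℕ) : Prop :=
  partStart ν k ≤ j ∧ j < partStart ν k + ν k

/-- Vertices `u`, `v` lie in different parts. -/
def crossPair {r : ℕ} (ν : Fin r → ℕ) (u v : ℕ) : Prop :=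
  ∀ k : Fin r, ¬ (inPart ν k u ∧ inPart ν k v)

/-- The complete multipartite graph `K_{n_1,…,n_r}` on `Fin n`, `n = Σ ν i`:
two vertices are adjacent iff they lie in different parts. -/
def partiteGraph (r n : ℕ) (ν : Fin r → ℕ) : SimpleGraph (Fin n) where
  Adj u v := u ≠ v ∧ crossPair ν u v
  symm := ⟨by
    rintro u v ⟨h1, h2⟩
    exact ⟨h1.symm, fun k hk => h2 k ⟨hk.2, hk.1⟩⟩⟩
  loopless := ⟨fun u h => h.1 rfl⟩

namespace SimpleGraph

theorem exists_isPath_length_eq_of_injective {V : Type*} {G : SimpleGraph V} {m : ℕ}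
    (f : Fin (m + 1) → V) (hf : Function.Injective f)
    (hadj : ∀ i : Fin m, G.Adj (f i.castSucc) (f i.succ)) :
    ∃ (u v : V) (p : G.Walk u v), p.IsPath ∧ p.length = m := by
  have hchain : (List.ofFn f).IsChain G.Adj :=
    List.isChain_ofFn.mpr fun i hi => hadj ⟨i, by omega⟩
  refine ⟨_, _, Walk.ofSupport _ (by simp) hchain, Walk.IsPath.mk' ?_, by simp⟩
  rw [Walk.support_ofSupport]
  exact List.nodup_ofFn.mpr hf

end SimpleGraph

section partStart

variable {r : ℕ} (ν : Fin r → ℕ)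

theorem partStart_mono : Monotone (partStart ν) := fun _ _ hjk =>
  Finset.sum_le_sum_of_subset (Finset.Iio_subset_Iio hjk)

theorem partStart_add_le_of_lt {j k : Fin r} (hjk : j < k) :
    partStart ν j + ν j ≤ partStart ν k := by
  rw [partStart, partStart, add_comm, ← Finset.sum_insert Finset.notMem_Iio_self]
  exact Finset.sum_le_sum_of_subset fun i hi => by
    simp only [Finset.mem_insert, Finset.mem_Iio] at hi ⊢
    rcases hi with rfl | hi
    exacts [hjk, hi.trans hjk]

theorem crossPair_of_lt_partStart_le {k : Fin r} {x y : ℕ} (hx : x < partStart ν k)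
    (hy : partStart ν k ≤ y) : crossPair ν x y := by
  rintro j ⟨hjx, hjy⟩
  rcases lt_or_ge j k with hjk | hkj
  · have := partStart_add_le_of_lt ν hjk
    exact absurd hjy.2 (by omega)
  · have := partStart_mono ν hkj
    exact absurd hjx.1 (by omega)

theorem sum_eq_partStart_add_of_val_eq_sub_one {k : Fin r} (hk : k.val = r - 1) :
    ∑ i, ν i = partStart ν k + ν k := by
  have : (Finset.univ : Finset (Fin r)) = insert k (Finset.Iio k) := by
    ext i
    simp only [Finset.mem_univ, Finset.mem_insert, Finset.mem_Iio, true_iff, Fin.ext_iff,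
      Fin.lt_def]
    omega
  rw [this, Finset.sum_insert Finset.notMem_Iio_self, partStart, add_comm]

end partStart

theorem partiteGraph_adj_of_lt_partStart_le {r n : ℕ} {ν : Fin r → ℕ} {k : Fin r}
    {u v : Fin n} (hu : (u : ℕ) < partStart ν k) (hv : partStart ν k ≤ v) :
    (partiteGraph r n ν).Adj u v :=
  ⟨fun h => by rw [h] at hu; omega, crossPair_of_lt_partStart_le ν hu hv⟩

def zigzag (s k : ℕ) : ℕ := if k % 2 = 0 then s + k / 2 else k / 2

theorem zigzag_le (s : ℕ) {k : ℕ} (hk : k ≤ 2 * s) : zigzag s k ≤ 2 * s := by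
  unfold zigzag; split_ifs <;> omega

theorem zigzag_injOn (s : ℕ) : Set.InjOn (zigzag s) (Set.Iic (2 * s)) := by
  intro a ha b hb hab
  simp only [Set.mem_Iic] at ha hb
  unfold zigzag at hab
  split_ifs at hab <;> omega

theorem zigzag_lt_le_or (s : ℕ) {i : ℕ} (hi : i < 2 * s) :
    (zigzag s i < s ∧ s ≤ zigzag s (i + 1)) ∨
      (zigzag s (i + 1) < s ∧ s ≤ zigzag s i) := by
  unfold zigzag; split_ifs <;> omega

theorem partiteGraph_exists_isPath_length_two_mul_partStart {r n : ℕ} (ν : Fin r → ℕ)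
    (k : Fin r) (hk : 2 * partStart ν k < n) :
    ∃ (u v : Fin n) (p : (partiteGraph r n ν).Walk u v),
      p.IsPath ∧ p.length = 2 * partStart ν k := by
  set s := partStart ν k
  have hlt (i : Fin (2 * s + 1)) : zigzag s i < n := by
    have := zigzag_le s (Nat.lt_succ_iff.mp i.2); omega
  refine SimpleGraph.exists_isPath_length_eq_of_injective (fun i => ⟨zigzag s i, hlt i⟩)
    (fun a b hab => Fin.ext <| zigzag_injOn s (Nat.lt_succ_iff.mp a.2) (Nat.lt_succ_iff.mp b.2)
      (congrArg Fin.val hab)) fun i => ?_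
  rcases zigzag_lt_le_or s i.2 with ⟨hi, hi'⟩ | ⟨hi, hi'⟩
  · exact partiteGraph_adj_of_lt_partStart_le hi hi'
  · exact (partiteGraph_adj_of_lt_partStart_le hi hi').symm

/-- If `n_r > n' = n_1 + ⋯ + n_{r-1}`, then `K_{n_1,…,n_r}` contains a
path on `2n' + 1` vertices, i.e. a path of length `2n'`; and
`2n' = 2n - max {n + 1, 2 n_r}`, the height of the binomial edge ideal `J_G`. -/
theorem stmt18 (r : ℕ) (hr : 2 ≤ r)
    (ν : Fin r → ℕ)
    (n : ℕ) (hn : n = ∑ i, ν i)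
    (hgt : ∑ i ∈ Finset.Iio (⟨r - 1, by omega⟩ : Fin r), ν i < ν ⟨r - 1, by omega⟩) :
    (∃ (u v : Fin n) (p : (partiteGraph r n ν).Walk u v),
      p.IsPath ∧ p.length = 2 * ∑ i ∈ Finset.Iio (⟨r - 1, by omega⟩ : Fin r), ν i) ∧
    2 * ∑ i ∈ Finset.Iio (⟨r - 1, by omega⟩ : Fin r), ν i =
      2 * n - max (n + 1) (2 * ν ⟨r - 1, by omega⟩) := by
  have hsplit := sum_eq_partStart_add_of_val_eq_sub_one ν (k := ⟨r - 1, by omega⟩) rfl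
  rw [← hn, partStart] at hsplit
  exact ⟨partiteGraph_exists_isPath_length_two_mul_partStart ν _ (by rw [partStart]; omega),
    by omega⟩
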